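/- arXiv:2203.05204 — 7 statements merged into one kernel-verified Lean document; each statement's English description precedes it below -/
import Mathlib

section
/- Let σ > 2 and χ > 0 with σ > χ, and define μ± = (σ ± √(σ² − 4))/2. Then the function ρ(z) = 1 for z ≤ 0 and ρ(z) = ((μ₊ − χ)e^{−μ₋ z} + (χ − μ₋)e^{−μ₊ z})/√(σ² − 4) for z > 0 is nonnegative on all of ℝ if and only if μ₊ ≥ χ. -/
/-- The piecewise traveling-wave profile is nonnegative iff μ₊ ≥ χ. -/
theorem stmt3 (σ χ : ℝ) (hσ : 2 < σ) (hχ : 0 < χ) (hσχ : χ < σ) :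
    let μp : ℝ := (σ + Real.sqrt (σ^2 - 4)) / 2
    let μm : ℝ := (σ - Real.sqrt (σ^2 - 4)) / 2
    let ρ : ℝ → ℝ := fun z => if z ≤ 0 then 1 else
      ((μp - χ) * Real.exp (-μm * z) + (χ - μm) * Real.exp (-μp * z)) / Real.sqrt (σ^2 - 4)
    (∀ z : ℝ, 0 ≤ ρ z) ↔ χ ≤ μp := by
  intro μp μm ρ
  have hs2 : (0:ℝ) < σ^2 - 4 := by nlinarith
  have hs : 0 < Real.sqrt (σ^2 - 4) := Real.sqrt_pos.mpr hs2
  have hss : Real.sqrt (σ^2 - 4) ^ 2 = σ^2 - 4 := Real.sq_sqrt hs2.le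
  set s := Real.sqrt (σ^2 - 4) with hsdef
  have hsσ : s < σ := by nlinarith
  have hμm_pos : 0 < μm := by simp only [μm]; linarith
  have hdiff : μp = μm + s := by simp only [μp, μm]; ring
  constructor
  · intro h
    by_contra hlt
    push_neg at hlt
    have hB : 0 < χ - μm := by
      have : μm < μp := by rw [hdiff]; linarith
      linarith
    have hA : 0 < χ - μp := by linarith
    set z := max 1 (Real.log ((χ - μm)/(χ - μp))/s + 1) with hz
    have hz1 : (1:ℝ) ≤ z := le_max_left _ _
    have hz0 : 0 < z := by linarith
    have hz2 : Real.log ((χ - μm)/(χ - μp))/s < z :=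
      lt_of_lt_of_le (by linarith) (le_max_right _ _)
    have hlog : Real.log ((χ - μm)/(χ - μp)) < s * z := by
      rw [div_lt_iff₀ hs] at hz2; linarith [hz2]
    have hexp : Real.exp (-s * z) < (χ - μp)/(χ - μm) := by
      rw [← Real.exp_log (show (0:ℝ) < (χ - μp)/(χ - μm) by positivity)]
      apply Real.exp_lt_exp.mpr
      rw [Real.log_div (by linarith) (by linarith)] at hlog ⊢
      linarith
    have key : (χ - μm) * Real.exp (-s * z) < χ - μp := by
      have := (mul_lt_mul_of_pos_left hexp hB)
      rw [mul_div_cancel₀ _ (ne_of_gt hB)] at this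
      linarith
    have hρ := h z
    simp only [ρ, if_neg (not_le.mpr hz0)] at hρ
    have hE : Real.exp (-μp * z) = Real.exp (-μm * z) * Real.exp (-s * z) := by
      rw [← Real.exp_add]; congr 1; rw [hdiff]; ring
    have hE1 : 0 < Real.exp (-μm * z) := Real.exp_pos _
    have hnum : (μp - χ) * Real.exp (-μm * z) + (χ - μm) * Real.exp (-μp * z) < 0 := by
      rw [hE]; nlinarith
    have : ((μp - χ) * Real.exp (-μm * z) + (χ - μm) * Real.exp (-μp * z)) / s < 0 :=
      div_neg_of_neg_of_pos hnum hs
    linarith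
  · intro hχμp z
    simp only [ρ]
    by_cases hz : z ≤ 0
    · simp [hz]
    · rw [if_neg hz]
      push_neg at hz
      have hE2 : 0 < Real.exp (-μp * z) := Real.exp_pos _
      have hle : Real.exp (-μp * z) ≤ Real.exp (-μm * z) := by
        apply Real.exp_le_exp.mpr
        rw [hdiff]; nlinarith
      apply div_nonneg _ hs.le
      nlinarith [mul_le_mul_of_nonneg_left hle (by linarith : (0:ℝ) ≤ μp - χ)]
end

section
/- Let σ > 0, D > 0, μ > 0 with μ ≠ σ/D, and let N : ℝ → ℝ be a C² function satisfying σN'(z) + DN''(z) = ρ(z)N(z), where 0 ≤ ρ(z)N(z) ≤ Ce^{−μz} for all z, N(z) → 1 and N'(z) → 0 as z → +∞. Then there is a constant C' > 0 such that |N(z) − 1| ≤ C'(e^{−(σ/D)z} + e^{−μz}) for all z ≥ 0. -/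
/-!
With `α = σ / D`, the equation says that `g = e^{α z} N'` satisfies `D g' = e^{α z} ρ N`, so
`0 ≤ g' ≤ (C / D) e^{(α - μ) z}`. Since `α ≠ μ`, integrating gives
`|g z| ≤ |g 0| + C / (D |α - μ|) (e^{(α - μ) z} + 1)` for `z ≥ 0`, i.e. `N'` decays like
`e^{-α z} + e^{-μ z}`. Integrating `N'` over `(z, ∞)` and using `N → 1` bounds `|N z - 1|`.
-/

open Real Set Filter MeasureTheory
open scoped Topology

lemma sub_le_of_hasDerivAt_le_exp {g g' : ℝ → ℝ} {A c : ℝ} (hc : c ≠ 0)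
    (hg : ∀ x, HasDerivAt g (g' x) x) (hle : ∀ x, g' x ≤ A * exp (c * x)) {a b : ℝ}
    (hab : a ≤ b) : g b - g a ≤ A * (exp (c * b) - exp (c * a)) / c := by
  have hanti : Antitone fun x => g x - A * exp (c * x) / c := by
    refine antitone_of_hasDerivAt_nonpos (f' := fun x => g' x - A * exp (c * x))
      (fun x => ?_) fun x => sub_nonpos.mpr (hle x)
    have hexp : HasDerivAt (fun x => A * exp (c * x) / c) (A * exp (c * x)) x :=
      ((((hasDerivAt_id x).const_mul c).exp.const_mul A).div_const c).congr_deriv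
        (by simp only [id, mul_one]; field_simp)
    exact (hg x).sub hexp
  have := hanti hab
  rw [mul_sub, sub_div]
  linarith

lemma abs_le_of_hasDerivAt_nonneg_le_exp {g g' : ℝ → ℝ} {A c : ℝ} (hc : c ≠ 0)
    (hA : 0 ≤ A) (hg : ∀ x, HasDerivAt g (g' x) x) (hnonneg : ∀ x, 0 ≤ g' x)
    (hle : ∀ x, g' x ≤ A * exp (c * x)) {s : ℝ} (hs : 0 ≤ s) :
    |g s| ≤ |g 0| + A / |c| * (exp (c * s) + 1) := by
  have hlow : g 0 ≤ g s := monotone_of_hasDerivAt_nonneg hg hnonneg hs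
  have hup : g s - g 0 ≤ A / |c| * (exp (c * s) + 1) :=
    calc g s - g 0 ≤ A * (exp (c * s) - exp (c * 0)) / c :=
          sub_le_of_hasDerivAt_le_exp hc hg hle hs
      _ = A / c * (exp (c * s) - 1) := by rw [mul_zero, exp_zero]; ring
      _ ≤ |A / c * (exp (c * s) - 1)| := le_abs_self _
      _ = A / |c| * |exp (c * s) - 1| := by rw [abs_mul, abs_div, abs_of_nonneg hA]
      _ ≤ A / |c| * (exp (c * s) + 1) := by
        gcongr
        rw [abs_sub_le_iff]
        constructor <;> linarith [exp_pos (c * s)]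
  have h0 : 0 ≤ A / |c| * (exp (c * s) + 1) := by positivity
  rw [abs_le]
  constructor <;> linarith [neg_abs_le (g 0), le_abs_self (g 0)]

lemma hasDerivAt_exp_mul_deriv {σ D : ℝ} (hD : D ≠ 0) {N : ℝ → ℝ} {z : ℝ}
    (hN : DifferentiableAt ℝ (deriv N) z) :
    HasDerivAt (fun x => exp (σ / D * x) * deriv N x)
      (exp (σ / D * z) * (σ * deriv N z + D * deriv (deriv N) z) / D) z := by
  refine (((hasDerivAt_id z).const_mul (σ / D)).exp.mul hN.hasDerivAt).congr_deriv ?_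
  simp only [id, mul_one]
  field_simp

lemma abs_deriv_le_of_ode {σ D μ C : ℝ} (hD : 0 < D) (hμσ : μ ≠ σ / D) (hC : 0 ≤ C)
    {N f : ℝ → ℝ} (hN : Differentiable ℝ (deriv N))
    (heq : ∀ z, σ * deriv N z + D * deriv (deriv N) z = f z)
    (hf : ∀ z, 0 ≤ f z ∧ f z ≤ C * exp (-μ * z)) {s : ℝ} (hs : 0 ≤ s) :
    |deriv N s| ≤ (|deriv N 0| + 2 * (C / (D * |σ / D - μ|))) *
      (exp (-(σ / D) * s) + exp (-μ * s)) := by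
  set α := σ / D
  set K := C / (D * |α - μ|)
  have hc : α - μ ≠ 0 := sub_ne_zero.mpr hμσ.symm
  have hK : 0 ≤ K := by positivity
  have hg (x : ℝ) :
      HasDerivAt (fun x => exp (α * x) * deriv N x) (exp (α * x) * f x / D) x := by
    simpa only [heq] using hasDerivAt_exp_mul_deriv (σ := σ) hD.ne' (hN x)
  have hg_nonneg (x : ℝ) : 0 ≤ exp (α * x) * f x / D := by
    have := (hf x).1
    positivity
  have hg_le (x : ℝ) : exp (α * x) * f x / D ≤ C / D * exp ((α - μ) * x) := by
    calc exp (α * x) * f x / D ≤ exp (α * x) * (C * exp (-μ * x)) / D := by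
          gcongr; exact (hf x).2
      _ = C / D * exp ((α - μ) * x) := by
          rw [sub_mul, sub_eq_add_neg, exp_add, neg_mul]; ring
  have hbound := abs_le_of_hasDerivAt_nonneg_le_exp hc (by positivity) hg hg_nonneg hg_le hs
  have hsplit : deriv N s = exp (-α * s) * (exp (α * s) * deriv N s) := by
    rw [← mul_assoc, ← exp_add]; simp
  have hdecay : exp (-α * s) * exp ((α - μ) * s) = exp (-μ * s) := by
    rw [← exp_add]; ring_nf
  simp only [mul_zero, exp_zero, one_mul] at hbound
  rw [hsplit, abs_mul, abs_of_pos (exp_pos _)]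
  calc exp (-α * s) * |exp (α * s) * deriv N s|
      ≤ exp (-α * s) * (|deriv N 0| + C / D / |α - μ| * (exp ((α - μ) * s) + 1)) := by
        gcongr
    _ = (|deriv N 0| + K) * exp (-α * s) + K * exp (-μ * s) := by
        rw [← hdecay, div_div]; ring
    _ ≤ (|deriv N 0| + 2 * K) * (exp (-α * s) + exp (-μ * s)) := by
        nlinarith [exp_pos (-α * s), exp_pos (-μ * s), abs_nonneg (deriv N 0)]

lemma abs_sub_le_of_abs_deriv_le_exp {N : ℝ → ℝ} {L K a b z : ℝ} (ha : 0 < a) (hb : 0 < b)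
    (hN : Differentiable ℝ N) (hlim : Tendsto N atTop (𝓝 L))
    (hbd : ∀ s, z ≤ s → |deriv N s| ≤ K * (exp (-a * s) + exp (-b * s))) :
    |N z - L| ≤ K / a * exp (-a * z) + K / b * exp (-b * z) := by
  have hmaj : IntegrableOn (fun s => K * (exp (-a * s) + exp (-b * s))) (Ioi z) :=
    ((exp_neg_integrableOn_Ioi z ha).add (exp_neg_integrableOn_Ioi z hb)).const_mul K
  have hbd_ae :
      ∀ᵐ s ∂volume.restrict (Ioi z), ‖deriv N s‖ ≤ K * (exp (-a * s) + exp (-b * s)) :=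
    (ae_restrict_mem measurableSet_Ioi).mono fun s hs => hbd s (le_of_lt hs)
  have hint : IntegrableOn (deriv N) (Ioi z) :=
    hmaj.mono' (measurable_deriv N).aestronglyMeasurable hbd_ae
  have hftc : ∫ s in Ioi z, deriv N s = L - N z :=
    integral_Ioi_of_hasDerivAt_of_tendsto' (fun s _ => (hN s).hasDerivAt) hint hlim
  have hexp (c : ℝ) (hc : 0 < c) : ∫ s in Ioi z, exp (-c * s) = exp (-c * z) / c := by
    rw [integral_exp_mul_Ioi (neg_lt_zero.mpr hc), div_neg, neg_div, neg_neg]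
  calc |N z - L| = ‖∫ s in Ioi z, deriv N s‖ := by rw [hftc, abs_sub_comm, Real.norm_eq_abs]
    _ ≤ ∫ s in Ioi z, K * (exp (-a * s) + exp (-b * s)) :=
        norm_integral_le_of_norm_le hmaj hbd_ae
    _ = K / a * exp (-a * z) + K / b * exp (-b * z) := by
        rw [integral_const_mul, integral_add (exp_neg_integrableOn_Ioi z ha)
          (exp_neg_integrableOn_Ioi z hb), hexp a ha, hexp b hb]
        ring

theorem stmt6_general (σ D μ C : ℝ) (hσ : 0 < σ) (hD : 0 < D) (hμ : 0 < μ)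
    (hμσ : μ ≠ σ / D)
    (N ρ : ℝ → ℝ) (hN : ContDiff ℝ 2 N)
    (heq : ∀ z : ℝ, σ * deriv N z + D * deriv (deriv N) z = ρ z * N z)
    (hρN : ∀ z : ℝ, 0 ≤ ρ z * N z ∧ ρ z * N z ≤ C * Real.exp (-μ * z))
    (hlim : Filter.Tendsto N Filter.atTop (nhds 1)) :
    ∃ C' : ℝ, 0 < C' ∧ ∀ z : ℝ, 0 ≤ z →
      |N z - 1| ≤ C' * (Real.exp (-(σ/D) * z) + Real.exp (-μ * z)) := by
  have hα : 0 < σ / D := div_pos hσ hD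
  have hC : 0 ≤ C := nonneg_of_mul_nonneg_left ((hρN 0).1.trans (hρN 0).2) (exp_pos _)
  set K := |deriv N 0| + 2 * (C / (D * |σ / D - μ|))
  have hK : 0 ≤ K := by positivity
  have hN' : Differentiable ℝ (deriv N) := (hN.iterate_deriv' 1 1).differentiable one_ne_zero
  refine ⟨K / (σ / D) + K / μ + 1, by positivity, fun z hz => ?_⟩
  have htail := abs_sub_le_of_abs_deriv_le_exp hα hμ (hN.differentiable two_ne_zero) hlim
    fun s hs => abs_deriv_le_of_ode hD hμσ hC hN' heq hρN (hz.trans hs)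
  have hKα : 0 ≤ K / (σ / D) := by positivity
  have hKμ : 0 ≤ K / μ := by positivity
  nlinarith [mul_nonneg hKα (exp_pos (-μ * z)).le, mul_nonneg hKμ (exp_pos (-(σ / D) * z)).le,
    exp_pos (-(σ / D) * z), exp_pos (-μ * z)]

/-- Exponential convergence of the nutrient profile N to 1 at +∞. -/
theorem stmt6 (σ D μ C : ℝ) (hσ : 0 < σ) (hD : 0 < D) (hμ : 0 < μ)
    (hμσ : μ ≠ σ / D) (hC : 0 < C)
    (N ρ : ℝ → ℝ) (hN : ContDiff ℝ 2 N)
    (heq : ∀ z : ℝ, σ * deriv N z + D * deriv (deriv N) z = ρ z * N z)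
    (hρN : ∀ z : ℝ, 0 ≤ ρ z * N z ∧ ρ z * N z ≤ C * Real.exp (-μ * z))
    (hlim : Filter.Tendsto N Filter.atTop (nhds 1))
    (hlim' : Filter.Tendsto (deriv N) Filter.atTop (nhds 0)) :
    ∃ C' : ℝ, 0 < C' ∧ ∀ z : ℝ, 0 ≤ z →
      |N z - 1| ≤ C' * (Real.exp (-(σ/D) * z) + Real.exp (-μ * z)) :=
  stmt6_general σ D μ C hσ hD hμ hμσ N ρ hN heq hρN hlim
end

section
/- For every ε ∈ (0,1), there exists a nondecreasing function θ_ε ∈ W^{2,∞}([0,1],[0,1]) with θ_ε(0) = 0, θ_ε'(0) = 0, θ_ε(1) = 1, θ_ε'(1) = 0, and sup_{z∈[0,1]} θ_ε'(z)·z ≤ Cε for an absolute constant C (one may take C = 32/9 for small ε, or the conclusion sup θ_ε'(z)z ≤ Cε/(1−ε)). -/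
open Set

set_option maxHeartbeats 1000000 in
/-- Existence of a nondecreasing W^{2,∞} transition function θ_ε from 0 to 1
with flat ends and sup_{z∈[0,1]} θ_ε'(z)·z ≤ Cε/(1−ε). -/
theorem stmt9 : ∃ C : ℝ, 0 < C ∧ ∀ ε : ℝ, 0 < ε → ε < 1 →
    ∃ θ : ℝ → ℝ,
      MonotoneOn θ (Icc (0:ℝ) 1) ∧
      (∀ z ∈ Icc (0:ℝ) 1, θ z ∈ Icc (0:ℝ) 1) ∧
      ContDiffOn ℝ 1 θ (Icc (0:ℝ) 1) ∧
      (∃ K : NNReal, LipschitzOnWith K (deriv θ) (Icc (0:ℝ) 1)) ∧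
      θ 0 = 0 ∧ deriv θ 0 = 0 ∧ θ 1 = 1 ∧ deriv θ 1 = 0 ∧
      ∀ z ∈ Icc (0:ℝ) 1, deriv θ z * z ≤ C * ε / (1 - ε) := by
  refine ⟨2, by norm_num, fun ε hε0 hε1 => ?_⟩
  -- the transition scale
  set a : ℝ := Real.exp (-(4/ε)) with ha_def
  have ha0 : 0 < a := Real.exp_pos _
  have hahalf : a ≤ 1/2 := by
    have h1 : a ≤ Real.exp (-1) := by
      apply Real.exp_le_exp.mpr
      have : (4:ℝ)/ε ≥ 4 := by
        rw [ge_iff_le, le_div_iff₀ hε0]; nlinarith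
      linarith
    have h2 : Real.exp (-1) < 1/2 := by
      rw [Real.exp_neg]
      rw [inv_lt_comm₀ (Real.exp_pos 1) (by norm_num)]
      calc (1/2 : ℝ)⁻¹ = 2 := by norm_num
      _ < Real.exp 1 := by
        have := Real.exp_one_gt_d9; linarith
    linarith
  have h1a : (0:ℝ) < 1 - a := by linarith
  have h1a2 : (1:ℝ)/2 ≤ 1 - a := by linarith
  have hloga : Real.log a = -(4/ε) := Real.log_exp _
  -- the building blocks of the derivative
  set L : ℝ → ℝ := fun z => ε / a^2 * z with hL_def
  set h : ℝ → ℝ := fun z => ε * (1 - z) / (max z a * (1 - a)) with hh_def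
  set φ : ℝ → ℝ := fun z => max 0 (min (L z) (h z)) with hφ_def
  have hmaxpos : ∀ z : ℝ, 0 < max z a := fun z => lt_of_lt_of_le ha0 (le_max_right z a)
  have hLc : Continuous L := continuous_const.mul continuous_id
  have hhc : Continuous h := by
    apply Continuous.div
    · exact continuous_const.mul (continuous_const.sub continuous_id)
    · exact (continuous_id.max continuous_const).mul continuous_const
    · intro z; exact (mul_pos (hmaxpos z) h1a).ne'
  have hφc : Continuous φ := continuous_const.max (hLc.min hhc)
  have hφnn : ∀ z, 0 ≤ φ z := fun z => le_max_left _ _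
  have hInt : ∀ u v : ℝ, IntervalIntegrable φ MeasureTheory.volume u v :=
    fun u v => hφc.intervalIntegrable u v
  -- h is nonnegative on [0,1]
  have hhnn : ∀ z : ℝ, z ≤ 1 → 0 ≤ h z := by
    intro z hz
    apply div_nonneg
    · nlinarith
    · exact le_of_lt (mul_pos (hmaxpos z) h1a)
  -- φ ≤ h on [0,1]
  have hφle : ∀ z : ℝ, z ≤ 1 → φ z ≤ h z := by
    intro z hz
    exact max_le (hhnn z hz) (min_le_right _ _)
  -- the total mass T
  set T : ℝ := ∫ t in (0:ℝ)..1, φ t with hT_def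
  -- lower bound on the middle part of the integral
  have hmidptwise : ∀ x ∈ Icc a (1/2 : ℝ), ε/2 * (1/x) ≤ φ x := by
    intro x hx
    obtain ⟨hxa, hx2⟩ := hx
    have hx0 : 0 < x := lt_of_lt_of_le ha0 hxa
    have hmx : max x a = x := max_eq_left hxa
    have e1 : ε/2 * (1/x) = ε/(2*x) := by field_simp
    refine le_trans (le_min ?_ ?_) (le_max_right _ _)
    · -- ε/2 * (1/x) ≤ L x
      show ε/2 * (1/x) ≤ ε / a^2 * x
      have e2 : ε/a^2 * x = ε*x/a^2 := by ring
      rw [e1, e2, div_le_div_iff₀ (by positivity) (by positivity)]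
      have hxx : a^2 ≤ x^2 := by nlinarith
      nlinarith [mul_le_mul_of_nonneg_left hxx hε0.le, mul_nonneg hε0.le (sq_nonneg x)]
    · -- ε/2 * (1/x) ≤ h x
      show ε/2 * (1/x) ≤ ε * (1 - x) / (max x a * (1 - a))
      rw [hmx, e1, div_le_div_iff₀ (by positivity) (by positivity)]
      nlinarith [mul_nonneg (mul_nonneg hε0.le hx0.le) (by linarith : (0:ℝ) ≤ 1 - 2*x + a)]
  have hT1 : 1 ≤ T := by
    have h0mem : (0:ℝ) ∉ Set.uIcc a (1/2:ℝ) := by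
      simp only [Set.mem_uIcc]
      push_neg
      constructor <;> (intro h'; linarith)
    have hval : (∫ t in a..(1/2:ℝ), ε/2 * (1/t)) = 2 - ε/2 * Real.log 2 := by
      rw [intervalIntegral.integral_const_mul, integral_one_div h0mem]
      rw [Real.log_div (by norm_num) ha0.ne', hloga]
      have hl2 : Real.log (1/2 : ℝ) - -(4/ε) = 4/ε - Real.log 2 := by
        rw [one_div, Real.log_inv]; ring
      rw [hl2]
      field_simp
      ring
    have hmono : (∫ t in a..(1/2:ℝ), ε/2 * (1/t)) ≤ ∫ t in a..(1/2:ℝ), φ t := by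
      apply intervalIntegral.integral_mono_on (by linarith)
      · apply ContinuousOn.intervalIntegrable
        apply ContinuousOn.mul continuousOn_const
        apply ContinuousOn.div continuousOn_const continuousOn_id
        intro x hx
        rw [Set.uIcc_of_le (by linarith : a ≤ (1/2:ℝ))] at hx
        exact (lt_of_lt_of_le ha0 hx.1).ne'
      · exact hInt _ _
      · exact hmidptwise
    have hsplit1 : (∫ t in (0:ℝ)..a, φ t) + (∫ t in a..(1/2:ℝ), φ t)
        = ∫ t in (0:ℝ)..(1/2:ℝ), φ t :=
      intervalIntegral.integral_add_adjacent_intervals (hInt _ _) (hInt _ _)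
    have hsplit2 : (∫ t in (0:ℝ)..(1/2:ℝ), φ t) + (∫ t in (1/2:ℝ)..1, φ t)
        = ∫ t in (0:ℝ)..1, φ t :=
      intervalIntegral.integral_add_adjacent_intervals (hInt _ _) (hInt _ _)
    have hnn1 : 0 ≤ ∫ t in (0:ℝ)..a, φ t :=
      intervalIntegral.integral_nonneg ha0.le (fun u _ => hφnn u)
    have hnn3 : 0 ≤ ∫ t in (1/2:ℝ)..1, φ t :=
      intervalIntegral.integral_nonneg (by norm_num) (fun u _ => hφnn u)
    have hlog2 : Real.log 2 < 1 := by
      have := Real.log_two_lt_d9; linarith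
    have hlog2' : 0 ≤ Real.log 2 := Real.log_nonneg (by norm_num)
    have hεl : ε * Real.log 2 ≤ Real.log 2 := by nlinarith
    rw [hT_def]
    nlinarith [hmono, hval]
  have hT0 : (0:ℝ) < T := lt_of_lt_of_le one_pos hT1
  -- FTC: the antiderivative and its derivative
  set I : ℝ → ℝ := fun z => ∫ t in (0:ℝ)..z, φ t with hI_def
  have hIderiv : ∀ z : ℝ, HasDerivAt I (φ z) z := by
    intro z
    exact intervalIntegral.integral_hasDerivAt_right (hInt 0 z)
      hφc.aestronglyMeasurable.stronglyMeasurableAtFilter hφc.continuousAt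
  have hθderiv : ∀ z : ℝ, HasDerivAt (fun z => I z / T) (φ z / T) z :=
    fun z => (hIderiv z).div_const T
  have hderiv_eq : deriv (fun z => I z / T) = fun z => φ z / T :=
    funext fun z => (hθderiv z).deriv
  -- monotonicity of I
  have hIm : ∀ x y : ℝ, x ≤ y → I x ≤ I y := by
    intro x y hxy
    have hsum : (∫ t in (0:ℝ)..x, φ t) + (∫ t in x..y, φ t) = ∫ t in (0:ℝ)..y, φ t :=
      intervalIntegral.integral_add_adjacent_intervals (hInt _ _) (hInt _ _)
    have hnn : 0 ≤ ∫ t in x..y, φ t :=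
      intervalIntegral.integral_nonneg hxy (fun u _ => hφnn u)
    rw [hI_def]
    simp only []
    linarith
  -- endpoint values of φ
  have hφ0 : φ 0 = 0 := by
    have hL0 : L 0 = 0 := by rw [hL_def]; simp
    have hh0 : 0 ≤ h 0 := hhnn 0 (by norm_num)
    rw [hφ_def]
    simp only [hL0]
    rw [min_eq_left hh0, max_self]
  have hφ1 : φ 1 = 0 := by
    have hh1 : h 1 = 0 := by rw [hh_def]; simp
    have hL1 : 0 ≤ L 1 := by rw [hL_def]; positivity
    rw [hφ_def]
    simp only [hh1]
    rw [min_eq_right hL1, max_self]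
  have hI0 : I 0 = 0 := by rw [hI_def]; simp
  have hI1 : I 1 = T := rfl
  -- Lipschitz estimate for φ on [0,1]
  set Kr : ℝ := ε / a^2 + (ε / (1 - a)) * (2 / a^2) with hKr_def
  have hKr0 : 0 ≤ Kr := by positivity
  have hφlip : ∀ x ∈ Icc (0:ℝ) 1, ∀ y ∈ Icc (0:ℝ) 1, |φ x - φ y| ≤ Kr * |x - y| := by
    intro x hx y hy
    obtain ⟨hx0, hx1⟩ := hx
    obtain ⟨hy0, hy1⟩ := hy
    have step1 : |φ x - φ y| ≤ |min (L x) (h x) - min (L y) (h y)| := by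
      rw [hφ_def]
      simp only []
      rw [max_comm 0 (min (L x) (h x)), max_comm 0 (min (L y) (h y))]
      exact abs_max_sub_max_le_abs _ _ _
    have stepL : |L x - L y| ≤ Kr * |x - y| := by
      have : L x - L y = ε / a^2 * (x - y) := by rw [hL_def]; ring
      rw [this, abs_mul, abs_of_nonneg (by positivity : (0:ℝ) ≤ ε / a^2)]
      have : 0 ≤ (ε / (1 - a)) * (2 / a^2) * |x - y| := by positivity
      rw [hKr_def]; nlinarith [abs_nonneg (x - y)]
    have steph : |h x - h y| ≤ Kr * |x - y| := by
      set mx : ℝ := max x a with hmx_def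
      set my : ℝ := max y a with hmy_def
      have hmx0 : 0 < mx := hmaxpos x
      have hmy0 : 0 < my := hmaxpos y
      have hmx1 : mx ≤ 1 := max_le hx1 (by linarith)
      have hmm : |my - mx| ≤ |x - y| := by
        rw [abs_sub_comm]
        calc |mx - my| = |max x a - max y a| := rfl
        _ ≤ |x - y| := abs_max_sub_max_le_abs _ _ _
      have hrw : h x - h y = (ε / (1 - a)) * ((1 - x) / mx - (1 - y) / my) := by
        rw [hh_def]
        simp only []
        rw [← hmx_def, ← hmy_def]
        field_simp
      rw [hrw, abs_mul, abs_of_nonneg (by positivity : (0:ℝ) ≤ ε / (1 - a))]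
      have hnum : (1 - x) / mx - (1 - y) / my = ((1 - x) * my - (1 - y) * mx) / (mx * my) := by
        field_simp
      have hnumbound : |(1 - x) * my - (1 - y) * mx| ≤ 2 * |x - y| := by
        have hid : (1 - x) * my - (1 - y) * mx = (1 - x) * (my - mx) + mx * (y - x) := by ring
        rw [hid]
        calc |(1 - x) * (my - mx) + mx * (y - x)|
            ≤ |(1 - x) * (my - mx)| + |mx * (y - x)| := abs_add_le _ _
        _ = |1 - x| * |my - mx| + |mx| * |y - x| := by rw [abs_mul, abs_mul]
        _ ≤ 1 * |x - y| + 1 * |x - y| := by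
            apply add_le_add
            · apply mul_le_mul (by rw [abs_of_nonneg (by linarith)]; linarith) hmm
                (abs_nonneg _) zero_le_one
            · rw [abs_sub_comm]
              apply mul_le_mul (by rw [abs_of_pos hmx0]; exact hmx1) le_rfl
                (abs_nonneg _) zero_le_one
        _ = 2 * |x - y| := by ring
      have hdenom : a^2 ≤ mx * my := by
        have h1 : a ≤ mx := le_max_right _ _
        have h2 : a ≤ my := le_max_right _ _
        nlinarith
      have : |(1 - x) / mx - (1 - y) / my| ≤ 2 * |x - y| / a^2 := by
        rw [hnum, abs_div, abs_of_pos (mul_pos hmx0 hmy0)]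
        exact div_le_div₀ (by positivity) hnumbound (by positivity) hdenom
      calc ε / (1 - a) * |(1 - x) / mx - (1 - y) / my|
          ≤ ε / (1 - a) * (2 * |x - y| / a^2) := by
            apply mul_le_mul_of_nonneg_left this (by positivity)
      _ = (ε / (1 - a)) * (2 / a^2) * |x - y| := by ring
      _ ≤ Kr * |x - y| := by
            rw [hKr_def]
            nlinarith [mul_nonneg (by positivity : (0:ℝ) ≤ ε/a^2) (abs_nonneg (x-y))]
    calc |φ x - φ y| ≤ |min (L x) (h x) - min (L y) (h y)| := step1
    _ ≤ max |L x - L y| |h x - h y| := abs_min_sub_min_le_max _ _ _ _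
    _ ≤ Kr * |x - y| := max_le stepL steph
  -- the pointwise bound φ z * z ≤ 2 ε on [0,1]
  have hbound : ∀ z ∈ Icc (0:ℝ) 1, φ z * z ≤ 2 * ε := by
    intro z hz
    obtain ⟨hz0, hz1⟩ := hz
    have h1 : φ z * z ≤ h z * z := mul_le_mul_of_nonneg_right (hφle z hz1) hz0
    have hmz0 : 0 < max z a := hmaxpos z
    have hzm : z ≤ max z a := le_max_left _ _
    have h2 : h z * z ≤ 2 * ε := by
      rw [hh_def]
      simp only []
      rw [div_mul_eq_mul_div, div_le_iff₀ (mul_pos hmz0 h1a)]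
      nlinarith [mul_le_mul_of_nonneg_left hzm hε0.le, mul_nonneg hε0.le hz0,
        mul_pos hε0 hmz0, mul_nonneg (mul_nonneg hε0.le hz0) hz0]
    linarith
  -- assemble
  have hmono : MonotoneOn (fun z => I z / T) (Icc (0:ℝ) 1) := by
    intro x _ y _ hxy
    exact div_le_div_of_nonneg_right (hIm x y hxy) hT0.le
  have hθ0 : (fun z => I z / T) 0 = 0 := by simp [hI0]
  have hθ1 : (fun z => I z / T) 1 = 1 := by
    simp only [hI1]
    exact div_self hT0.ne'
  refine ⟨fun z => I z / T, hmono, ?_, ?_, ?_, hθ0, ?_, hθ1, ?_, ?_⟩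
  · -- maps into [0,1]
    intro z hz
    constructor
    · have := hmono (left_mem_Icc.mpr (by norm_num)) hz hz.1
      rw [hθ0] at this; exact this
    · have := hmono hz (right_mem_Icc.mpr (by norm_num)) hz.2
      rw [hθ1] at this; exact this
  · -- ContDiffOn
    apply ContDiff.contDiffOn
    rw [contDiff_one_iff_deriv]
    refine ⟨fun z => (hθderiv z).differentiableAt, ?_⟩
    rw [hderiv_eq]
    exact hφc.div_const T
  · -- Lipschitz derivative
    refine ⟨Real.toNNReal Kr, ?_⟩
    rw [lipschitzOnWith_iff_dist_le_mul]
    intro x hx y hy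
    rw [hderiv_eq]
    simp only [Real.dist_eq, Real.coe_toNNReal _ hKr0]
    have h1 : |φ x / T - φ y / T| = |φ x - φ y| / T := by
      rw [div_sub_div_same, abs_div, abs_of_pos hT0]
    rw [h1]
    calc |φ x - φ y| / T ≤ |φ x - φ y| / 1 := by
          apply div_le_div_of_nonneg_left (abs_nonneg _) one_pos hT1
    _ = |φ x - φ y| := div_one _
    _ ≤ Kr * |x - y| := hφlip x hx y hy
  · -- deriv at 0
    rw [hderiv_eq]
    simp [hφ0]
  · -- deriv at 1
    rw [hderiv_eq]
    simp [hφ1]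
  · -- the sup bound
    intro z hz
    rw [hderiv_eq]
    simp only []
    have h1 : φ z / T * z = φ z * z / T := by ring
    rw [h1]
    have h2 : φ z * z / T ≤ φ z * z / 1 :=
      div_le_div_of_nonneg_left (mul_nonneg (hφnn z) hz.1) one_pos hT1
    have h3 : φ z * z ≤ 2 * ε := hbound z hz
    have h4 : 2 * ε ≤ 2 * ε / (1 - ε) := by
      rw [le_div_iff₀ (by linarith : (0:ℝ) < 1 - ε)]
      nlinarith
    rw [div_one] at h2
    linarith
end

section
/- Let χ > 1 and σ = χ + 1/χ, and set γ = (1/4)·min(σ² − 4, 1/χ²). Then for any real λ < γ, the equation χ = √(σ² − 4(1+λ)) + √(1/χ² − 4λ) holds if and only if λ = 0. Equivalently, the function λ ↦ √(σ² − 4(1+λ)) + √(1/χ² − 4λ) is strictly decreasing on (−∞, γ) and equals χ exactly at λ = 0. -/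
/-- For χ > 1, σ = χ + 1/χ, γ = ¼min(σ²−4, 1/χ²): the function
F(λ) = √(σ²−4(1+λ)) + √(1/χ²−4λ) is strictly decreasing on (−∞,γ),
F(0) = χ, and for λ < γ, F(λ) = χ iff λ = 0. -/
theorem stmt12 (χ : ℝ) (hχ : 1 < χ) :
    let σ : ℝ := χ + 1/χ
    let γ : ℝ := (1/4) * min (σ^2 - 4) (1/χ^2)
    let F : ℝ → ℝ := fun lam => Real.sqrt (σ^2 - 4*(1+lam)) + Real.sqrt (1/χ^2 - 4*lam)
    (∀ lam : ℝ, lam < γ → (F lam = χ ↔ lam = 0)) ∧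
    StrictAntiOn F (Set.Iio γ) ∧
    F 0 = χ := by
  intro σ γ F
  have hχ0 : 0 < χ := lt_trans one_pos hχ
  have hinv : 1/χ < 1 := by rw [div_lt_one hχ0]; linarith
  have hd : 0 < χ - 1/χ := by linarith
  have hs4 : σ^2 - 4 = (χ - 1/χ)^2 := by
    show (χ + 1/χ)^2 - 4 = (χ - 1/χ)^2
    field_simp
    ring
  have h1 : 0 < σ^2 - 4 := by rw [hs4]; positivity
  have h2 : 0 < 1/χ^2 := by positivity
  have hγ1 : 4 * γ ≤ σ^2 - 4 := by
    have := min_le_left (σ^2 - 4) (1/χ^2)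
    show 4 * ((1/4) * min (σ^2 - 4) (1/χ^2)) ≤ σ^2 - 4
    linarith
  have hγ2 : 4 * γ ≤ 1/χ^2 := by
    have := min_le_right (σ^2 - 4) (1/χ^2)
    show 4 * ((1/4) * min (σ^2 - 4) (1/χ^2)) ≤ 1/χ^2
    linarith
  have hγpos : 0 < γ := mul_pos (by norm_num) (lt_min h1 h2)
  have hanti : StrictAntiOn F (Set.Iio γ) := by
    intro a ha b hb hab
    simp only [Set.mem_Iio] at ha hb
    have h1b : 0 ≤ σ^2 - 4*(1+b) := by linarith
    have h2b : 0 ≤ 1/χ^2 - 4*b := by linarith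
    exact add_lt_add (Real.sqrt_lt_sqrt h1b (by linarith))
      (Real.sqrt_lt_sqrt h2b (by linarith))
  have hF0 : F 0 = χ := by
    show Real.sqrt (σ^2 - 4*(1+0)) + Real.sqrt (1/χ^2 - 4*0) = χ
    have e1 : σ^2 - 4*(1+0) = (χ - 1/χ)^2 := by rw [← hs4]; ring
    have e2 : 1/χ^2 - 4*0 = (1/χ)^2 := by ring
    rw [e1, e2, Real.sqrt_sq hd.le, Real.sqrt_sq (by positivity)]
    ring
  refine ⟨?_, hanti, hF0⟩
  intro lam hlam
  constructor
  · intro hF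
    exact hanti.injOn (Set.mem_Iio.mpr hlam) (Set.mem_Iio.mpr hγpos) (by rw [hF, hF0])
  · rintro rfl; exact hF0
end

section
/- Let β : ℝ → ℝ be bounded measurable with ∫_ℝ β₋(z) dz =: c < ∞, where β₋ = max(−β, 0), and let V(z) = ∫₀^z β, W(z) = ∫₀^z β₊ − c. Then V − 2c ≤ W ≤ V on ℝ, and consequently for any ν ∈ H¹(e^V dz): e^{−2c}‖ν² e^V‖_∞ ≤ 4‖ν‖_{L²(e^V dz)}·‖ν'‖_{L²(e^V dz)}. -/
/-!
Since V = ∫₀^z β₊ − ∫₀^z β₋ and |∫₀^z β₋| ≤ c, W lies between V − 2c and V. The weight e^W is nondecreasing and below e^V, so for z ≤ t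
the fundamental theorem of calculus for ν² gives
ν(z)² e^{W(z)} ≤ ν(t)² e^{W(t)} + 2 ∫ |ν| |ν'| e^V.
Letting t → ∞ and applying Cauchy–Schwarz in L²(e^V dz) yields ν² e^W ≤ 2 ‖ν‖ ‖ν'‖, and
e^{−2c} e^V ≤ e^W finishes the proof.
-/

open MeasureTheory Filter Set Real Topology

section WeightedCauchySchwarz

variable {α : Type*} [MeasurableSpace α] {μ : Measure α} {f g w : α → ℝ}

lemma memLp_two_abs_mul_sqrt (hf : AEStronglyMeasurable f μ) (hw : AEStronglyMeasurable w μ)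
    (hw0 : 0 ≤ w) (hfw : Integrable (fun a => f a ^ 2 * w a) μ) :
    MemLp (fun a => |f a| * √(w a)) 2 μ := by
  have hm : AEStronglyMeasurable (fun a => |f a| * √(w a)) μ :=
    (continuous_abs.comp_aestronglyMeasurable hf).mul
      (Real.continuous_sqrt.comp_aestronglyMeasurable hw)
  refine (memLp_two_iff_integrable_sq hm).2 (hfw.congr (ae_of_all _ fun a => ?_))
  simp only [mul_pow, sq_abs, Real.sq_sqrt (hw0 a)]

lemma integrable_abs_mul_abs_mul_of_sq_mul (hf : AEStronglyMeasurable f μ)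
    (hg : AEStronglyMeasurable g μ) (hw : AEStronglyMeasurable w μ) (hw0 : 0 ≤ w)
    (hfw : Integrable (fun a => f a ^ 2 * w a) μ) (hgw : Integrable (fun a => g a ^ 2 * w a) μ) :
    Integrable (fun a => |f a| * |g a| * w a) μ :=
  ((memLp_two_abs_mul_sqrt hf hw hw0 hfw).integrable_mul
    (memLp_two_abs_mul_sqrt hg hw hw0 hgw)).congr <| ae_of_all μ fun a => by
      simp only [Pi.mul_apply, mul_mul_mul_comm, Real.mul_self_sqrt (hw0 a)]

lemma integral_abs_mul_abs_mul_le (hf : AEStronglyMeasurable f μ)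
    (hg : AEStronglyMeasurable g μ) (hw : AEStronglyMeasurable w μ) (hw0 : 0 ≤ w)
    (hfw : Integrable (fun a => f a ^ 2 * w a) μ) (hgw : Integrable (fun a => g a ^ 2 * w a) μ) :
    ∫ a, |f a| * |g a| * w a ∂μ ≤ √(∫ a, f a ^ 2 * w a ∂μ) * √(∫ a, g a ^ 2 * w a ∂μ) := by
  have holder := integral_mul_le_Lp_mul_Lq_of_nonneg Real.HolderConjugate.two_two
    (ae_of_all μ fun a => mul_nonneg (abs_nonneg (f a)) (Real.sqrt_nonneg (w a)))
    (ae_of_all μ fun a => mul_nonneg (abs_nonneg (g a)) (Real.sqrt_nonneg (w a)))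
    (by simpa using memLp_two_abs_mul_sqrt hf hw hw0 hfw)
    (by simpa using memLp_two_abs_mul_sqrt hg hw hw0 hgw)
  simpa only [mul_mul_mul_comm, Real.mul_self_sqrt (hw0 _), Real.rpow_two, mul_pow, sq_abs,
    Real.sq_sqrt (hw0 _), ← Real.sqrt_eq_rpow] using holder

end WeightedCauchySchwarz

section SignParts

variable {μ : Measure ℝ} {f : ℝ → ℝ}

lemma intervalIntegral_eq_posPart_sub_negPart {a b : ℝ} (hf : IntervalIntegrable f μ a b) :
    ∫ s in a..b, f s ∂μ = (∫ s in a..b, max (f s) 0 ∂μ) - ∫ s in a..b, max (-f s) 0 ∂μ := by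
  rw [← intervalIntegral.integral_sub ⟨hf.1.pos_part, hf.2.pos_part⟩
    ⟨hf.1.neg_part, hf.2.neg_part⟩]
  simp only [max_zero_sub_max_neg_zero_eq_self]

lemma abs_intervalIntegral_le_integral_of_nonneg (hf : Integrable f μ) (hf0 : 0 ≤ f) (a b : ℝ) :
    |∫ s in a..b, f s ∂μ| ≤ ∫ s, f s ∂μ :=
  calc |∫ s in a..b, f s ∂μ|
      ≤ ∫ s in uIoc a b, ‖f s‖ ∂μ := (Real.norm_eq_abs _).symm.trans_le
        intervalIntegral.norm_integral_le_integral_norm_uIoc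
    _ = ∫ s in uIoc a b, f s ∂μ := by simp only [Real.norm_of_nonneg (hf0 _)]
    _ ≤ ∫ s, f s ∂μ := setIntegral_le_integral hf (ae_of_all μ hf0)

lemma intervalIntegral_posPart_sub_integral_negPart_mem_Icc {a z : ℝ}
    (hf : IntervalIntegrable f μ a z) (hneg : Integrable (fun s => max (-f s) 0) μ) :
    (∫ s in a..z, max (f s) 0 ∂μ) - ∫ s, max (-f s) 0 ∂μ ∈
      Icc ((∫ s in a..z, f s ∂μ) - 2 * ∫ s, max (-f s) 0 ∂μ) (∫ s in a..z, f s ∂μ) := by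
  have hbound := abs_le.1 <|
    abs_intervalIntegral_le_integral_of_nonneg hneg (fun s => le_max_right _ _) a z
  rw [intervalIntegral_eq_posPart_sub_negPart hf]
  constructor <;> linarith [hbound.1, hbound.2]

lemma monotone_intervalIntegral_of_nonneg (hf : ∀ a b, IntervalIntegrable f μ a b) (hf0 : 0 ≤ f)
    (a : ℝ) : Monotone fun z => ∫ s in a..z, f s ∂μ := fun x y hxy => by
  rw [← sub_nonneg, intervalIntegral.integral_interval_sub_left (hf a y) (hf a x)]
  exact intervalIntegral.integral_nonneg hxy fun s _ => hf0 s

end SignParts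

section WeightedAgmon

variable {ν V W : ℝ → ℝ}

lemma sq_sub_sq_le_two_mul_integral_abs_mul_deriv (hν : Differentiable ℝ ν) {z t : ℝ}
    (hzt : z ≤ t) (hint : IntervalIntegrable (fun s => ν s * deriv ν s) volume z t) :
    ν z ^ 2 - ν t ^ 2 ≤ 2 * ∫ s in z..t, |ν s * deriv ν s| := by
  have hftc : ∫ s in z..t, 2 * (ν s * deriv ν s) = ν t ^ 2 - ν z ^ 2 :=
    intervalIntegral.integral_eq_sub_of_hasDerivAt
      (fun s _ => by simpa [mul_assoc] using (hν s).hasDerivAt.pow 2) (hint.const_mul 2)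
  rw [intervalIntegral.integral_const_mul] at hftc
  linarith [neg_abs_le (∫ s in z..t, ν s * deriv ν s),
    intervalIntegral.abs_integral_le_integral_abs (f := fun s => ν s * deriv ν s) (μ := volume) hzt]

lemma exp_mul_abs_mul_deriv_le (hWV : W ≤ V) (hW : Monotone W) {z s : ℝ} (hzs : z ≤ s) :
    exp (W z) * |ν s * deriv ν s| ≤ |ν s| * |deriv ν s| * exp (V s) := by
  rw [abs_mul, mul_comm]
  gcongr
  exact (hW hzs).trans (hWV s)

variable (hν : Differentiable ℝ ν) (hWV : W ≤ V) (hW : Monotone W)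
  (hI : Integrable fun s => |ν s| * |deriv ν s| * exp (V s))
include hν hWV hW hI

lemma intervalIntegrable_mul_deriv {z t : ℝ} (hzt : z ≤ t) :
    IntervalIntegrable (fun s => ν s * deriv ν s) volume z t := by
  refine (hI.intervalIntegrable.const_mul (exp (-W z))).mono_fun'
    (hν.continuous.measurable.mul (measurable_deriv ν)).aestronglyMeasurable
    ((ae_restrict_iff' measurableSet_uIoc).2 (ae_of_all _ fun s hs => ?_))
  rw [uIoc_of_le hzt] at hs
  dsimp only
  rw [Real.norm_eq_abs, exp_neg, ← div_eq_inv_mul, le_div_iff₀' (exp_pos _)]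
  exact exp_mul_abs_mul_deriv_le hWV hW hs.1.le

lemma sq_mul_exp_le_sq_mul_exp_add {z t : ℝ} (hzt : z ≤ t) :
    ν z ^ 2 * exp (W z) ≤ ν t ^ 2 * exp (W t) + 2 * ∫ s, |ν s| * |deriv ν s| * exp (V s) := by
  have hftc := mul_le_mul_of_nonneg_left (sq_sub_sq_le_two_mul_integral_abs_mul_deriv hν hzt
    (intervalIntegrable_mul_deriv hν hWV hW hI hzt)) (exp_pos (W z)).le
  have hweight : exp (W z) * ∫ s in z..t, |ν s * deriv ν s| ≤
      ∫ s, |ν s| * |deriv ν s| * exp (V s) :=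
    calc exp (W z) * ∫ s in z..t, |ν s * deriv ν s|
        = ∫ s in z..t, exp (W z) * |ν s * deriv ν s| :=
          (intervalIntegral.integral_const_mul _ _).symm
      _ ≤ ∫ s in z..t, |ν s| * |deriv ν s| * exp (V s) :=
          intervalIntegral.integral_mono_on hzt
            ((intervalIntegrable_mul_deriv hν hWV hW hI hzt).abs.const_mul _)
            hI.intervalIntegrable fun s hs => exp_mul_abs_mul_deriv_le hWV hW hs.1
      _ ≤ ∫ s, |ν s| * |deriv ν s| * exp (V s) := by
          rw [intervalIntegral.integral_of_le hzt]
          exact setIntegral_le_integral hI (ae_of_all _ fun s => by positivity)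
  have hmono : ν t ^ 2 * exp (W z) ≤ ν t ^ 2 * exp (W t) := by
    gcongr
    exact hW hzt
  linarith

lemma sq_mul_exp_le_two_mul_integral
    (hdecay : Tendsto (fun t => ν t ^ 2 * exp (W t)) atTop (𝓝 0)) (z : ℝ) :
    ν z ^ 2 * exp (W z) ≤ 2 * ∫ s, |ν s| * |deriv ν s| * exp (V s) := by
  have hlim := hdecay.add_const (2 * ∫ s, |ν s| * |deriv ν s| * exp (V s))
  rw [zero_add] at hlim
  exact ge_of_tendsto hlim <| eventually_atTop.2
    ⟨z, fun t => sq_mul_exp_le_sq_mul_exp_add hν hWV hW hI⟩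

end WeightedAgmon

theorem stmt14_general (β : ℝ → ℝ) (M : ℝ) (hβmeas : Measurable β) (hβbd : ∀ z, |β z| ≤ M)
    (c : ℝ) (hβint : Integrable (fun z => max (-(β z)) 0) (volume : Measure ℝ))
    (hc : (∫ z : ℝ, max (-(β z)) 0) = c)
    (V W : ℝ → ℝ)
    (hV : ∀ z : ℝ, V z = ∫ s in (0:ℝ)..z, β s)
    (hW : ∀ z : ℝ, W z = (∫ s in (0:ℝ)..z, max (β s) 0) - c)
    (ν : ℝ → ℝ) (hν : Differentiable ℝ ν)
    (hν2 : Integrable (fun z => (ν z)^2 * Real.exp (V z)) (volume : Measure ℝ))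
    (hν'2 : Integrable (fun z => (deriv ν z)^2 * Real.exp (V z)) (volume : Measure ℝ))
    (hdecayT : Filter.Tendsto (fun z => (ν z)^2 * Real.exp (W z)) Filter.atTop (nhds 0)) :
    (∀ z : ℝ, V z - 2*c ≤ W z ∧ W z ≤ V z) ∧
    (∀ z : ℝ, Real.exp (-2*c) * ((ν z)^2 * Real.exp (V z)) ≤
      4 * Real.sqrt (∫ s : ℝ, (ν s)^2 * Real.exp (V s)) *
        Real.sqrt (∫ s : ℝ, (deriv ν s)^2 * Real.exp (V s))) := by
  have hβloc : ∀ a b, IntervalIntegrable β volume a b := fun a b =>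
    intervalIntegrable_const.mono_fun' hβmeas.aestronglyMeasurable (ae_of_all _ hβbd)
  have hWV : ∀ z, V z - 2 * c ≤ W z ∧ W z ≤ V z := fun z => by
    rw [hV, hW, ← hc]
    exact intervalIntegral_posPart_sub_integral_negPart_mem_Icc (hβloc 0 z) hβint
  refine ⟨hWV, fun z => ?_⟩
  have hVcont : Continuous V := by
    simpa only [← hV] using intervalIntegral.continuous_primitive hβloc 0
  have hWmono : Monotone W := fun x y hxy => by
    simp only [hW, sub_le_sub_iff_right]
    exact monotone_intervalIntegral_of_nonneg
      (fun a b => ⟨(hβloc a b).1.pos_part, (hβloc a b).2.pos_part⟩)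
      (fun s => le_max_right _ _) 0 hxy
  have hνm := hν.continuous.aestronglyMeasurable (μ := volume)
  have hν'm := (measurable_deriv ν).aestronglyMeasurable (μ := volume)
  have hexpm := (continuous_exp.comp hVcont).aestronglyMeasurable (μ := volume)
  have hexp0 : 0 ≤ fun s => exp (V s) := fun s => (exp_pos _).le
  calc exp (-2 * c) * (ν z ^ 2 * exp (V z))
      ≤ ν z ^ 2 * exp (W z) := by
        rw [mul_left_comm, ← exp_add]
        gcongr
        linarith [(hWV z).1]
    _ ≤ 2 * ∫ s, |ν s| * |deriv ν s| * exp (V s) :=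
        sq_mul_exp_le_two_mul_integral hν (fun s => (hWV s).2) hWmono
          (integrable_abs_mul_abs_mul_of_sq_mul hνm hν'm hexpm hexp0 hν2 hν'2) hdecayT z
    _ ≤ 2 * (√(∫ s, ν s ^ 2 * exp (V s)) * √(∫ s, deriv ν s ^ 2 * exp (V s))) := by
        gcongr
        exact integral_abs_mul_abs_mul_le hνm hν'm hexpm hexp0 hν2 hν'2
    _ ≤ 4 * √(∫ s, ν s ^ 2 * exp (V s)) * √(∫ s, deriv ν s ^ 2 * exp (V s)) := by
        rw [mul_assoc]
        gcongr
        norm_num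

/-- With V(z) = ∫₀^z β and W(z) = (∫₀^z β₊) − c where c = ∫ β₋ < ∞,
one has V − 2c ≤ W ≤ V, and for ν in the weighted H¹ space (with
ν²e^W vanishing at ±∞): e^{−2c}‖ν²e^V‖_∞ ≤ 4‖ν‖_{L²(e^V)}‖ν'‖_{L²(e^V)}. -/
theorem stmt14 (β : ℝ → ℝ) (M : ℝ) (hβmeas : Measurable β) (hβbd : ∀ z, |β z| ≤ M)
    (c : ℝ) (hβint : Integrable (fun z => max (-(β z)) 0) (volume : Measure ℝ))
    (hc : (∫ z : ℝ, max (-(β z)) 0) = c)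
    (V W : ℝ → ℝ)
    (hV : ∀ z : ℝ, V z = ∫ s in (0:ℝ)..z, β s)
    (hW : ∀ z : ℝ, W z = (∫ s in (0:ℝ)..z, max (β s) 0) - c)
    (ν : ℝ → ℝ) (hν : Differentiable ℝ ν)
    (hν2 : Integrable (fun z => (ν z)^2 * Real.exp (V z)) (volume : Measure ℝ))
    (hν'2 : Integrable (fun z => (deriv ν z)^2 * Real.exp (V z)) (volume : Measure ℝ))
    (hdecayT : Filter.Tendsto (fun z => (ν z)^2 * Real.exp (W z)) Filter.atTop (nhds 0))
    (hdecayB : Filter.Tendsto (fun z => (ν z)^2 * Real.exp (W z)) Filter.atBot (nhds 0)) :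
    (∀ z : ℝ, V z - 2*c ≤ W z ∧ W z ≤ V z) ∧
    (∀ z : ℝ, Real.exp (-2*c) * ((ν z)^2 * Real.exp (V z)) ≤
      4 * Real.sqrt (∫ s : ℝ, (ν s)^2 * Real.exp (V s)) *
        Real.sqrt (∫ s : ℝ, (deriv ν s)^2 * Real.exp (V s))) :=
  stmt14_general β M hβmeas hβbd c hβint hc V W hV hW ν hν hν2 hν'2 hdecayT
end

section
/- Let 0 < ε < 1 and 1 < χ < ε^{−1}, and set σ* = (χ + 1/χ)/(1 + ε²). Then σ* < ε^{−1}, σ* ≥ 2/(1+ε²), and μ₊(σ*) = χ(1+ε²)/(1 − ε²χ²), where μ₊(σ) = (σ(1−ε²) + √(σ²(1+ε²)² − 4))/(2(1 − ε²σ²)). -/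
/-- For 0 < ε < 1 and 1 < χ < ε⁻¹, the kinetic minimal speed
σ* = (χ + 1/χ)/(1+ε²) is subsonic, at least 2/(1+ε²), and
μ₊(σ*) = χ(1+ε²)/(1 − ε²χ²). -/
theorem stmt17 (ε χ : ℝ) (hε : 0 < ε) (hε1 : ε < 1) (hχ : 1 < χ) (hχε : χ < ε⁻¹) :
    let σs : ℝ := (χ + 1/χ) / (1 + ε^2)
    let μp : ℝ → ℝ := fun σ =>
      (σ*(1-ε^2) + Real.sqrt (σ^2*(1+ε^2)^2 - 4)) / (2*(1-ε^2*σ^2))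
    σs < ε⁻¹ ∧ 2/(1+ε^2) ≤ σs ∧ μp σs = χ*(1+ε^2) / (1 - ε^2*χ^2) := by
  intro σs μp
  have hχ0 : (0:ℝ) < χ := by linarith
  have h1χ : χ * (1/χ) = 1 := mul_one_div_cancel hχ0.ne'
  have hεχ : ε * χ < 1 := by
    have h := mul_lt_mul_of_pos_left hχε hε
    rwa [mul_inv_cancel₀ hε.ne'] at h
  have h1 : (0:ℝ) < 1 + ε^2 := by positivity
  have hdenχ : (0:ℝ) < 1 - ε^2*χ^2 := by
    nlinarith [mul_pos hε hχ0, mul_pos (mul_pos hε hχ0) (mul_pos hε hχ0)]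
  have key : (χ + 1/χ) * ε < 1 + ε^2 := by
    have hfac : (0:ℝ) < (1 - ε*χ) * (χ - ε) :=
      mul_pos (by linarith) (by linarith)
    nlinarith [hfac, h1χ, hχ0]
  have hσ1 : σs < ε⁻¹ := by
    show (χ + 1/χ) / (1 + ε^2) < ε⁻¹
    rw [div_lt_iff₀ h1, ← div_eq_inv_mul, lt_div_iff₀ hε]
    linarith [key]
  have hσ0 : 0 < σs := by
    have : 0 < χ + 1/χ := by positivity
    exact div_pos this h1
  have hεσ : ε * σs < 1 := by
    have h := mul_lt_mul_of_pos_left hσ1 hε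
    rwa [mul_inv_cancel₀ hε.ne'] at h
  have hdenσ : (0:ℝ) < 1 - ε^2*σs^2 := by
    nlinarith [mul_pos hε hσ0, mul_pos (mul_pos hε hσ0) (mul_pos hε hσ0)]
  have hsq : σs^2*(1+ε^2)^2 - 4 = (χ - 1/χ)^2 := by
    show ((χ + 1/χ) / (1 + ε^2))^2*(1+ε^2)^2 - 4 = (χ - 1/χ)^2
    field_simp
    ring
  have hsqrt : Real.sqrt (σs^2*(1+ε^2)^2 - 4) = χ - 1/χ := by
    rw [hsq, Real.sqrt_sq]
    have : 1/χ < 1 := by rw [div_lt_one hχ0]; linarith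
    linarith
  have h2 : 2 ≤ χ + 1/χ := by nlinarith [sq_nonneg (χ - 1), h1χ, hχ0]
  refine ⟨hσ1, ?_, ?_⟩
  · show 2/(1+ε^2) ≤ (χ + 1/χ)/(1+ε^2)
    gcongr
  · show (σs*(1-ε^2) + Real.sqrt (σs^2*(1+ε^2)^2 - 4)) / (2*(1-ε^2*σs^2))
        = χ*(1+ε^2) / (1 - ε^2*χ^2)
    rw [hsqrt, div_eq_div_iff (by linarith) hdenχ.ne']
    have hσdef : σs = (χ + 1/χ) / (1 + ε^2) := rfl
    rw [hσdef]
    field_simp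
    ring
end

section
/- Let 0 < ε < 1 and 2/(1+ε²) ≤ σ < 1/ε, with μ₊(σ) = (σ(1−ε²) + √(σ²(1+ε²)²−4))/(2(1−ε²σ²)). For each root μ ∈ {μ₋(σ), μ₊(σ)}, the quantity (μ(ε^{−1}+σ) − 1)(μ(ε^{−1}−σ) + 1) is nonnegative; equivalently, −1/σ is greater than or equal to both roots −μ± of the characteristic polynomial P(X) = (ε^{−2}−σ²)X² + σ(ε^{−2}−1)X + ε^{−2}, since P(−1/σ) = 1/(ε²σ²) > 0 and P'(−1/σ) ≥ 0. -/
/-!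
Write `Q(m) = (1 - ε²σ²) m² - σ(1 - ε²) m + 1`, so that `μ±` are its roots and `ε² P(X) = Q(-X)`.
The leading coefficient is positive since `εσ < 1`, and `Q(1/σ) = 1/σ² > 0`; the lower bound
`σ²(1 + ε²) ≥ 2` puts `1/σ` left of the vertex of `Q`, hence left of both roots. Finally
`(μ(ε⁻¹ + σ) - 1)(μ(ε⁻¹ - σ) + 1) = (ε⁻² + 1)(σμ - 1) + ε⁻² Q(μ)`, which at a root is `≥ 0`.
-/

section QuadraticRoots

variable {K : Type*} [Field K] [LinearOrder K] [IsStrictOrderedRing K] {a b c s x : K}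

theorem quadratic_eval_root_add (ha : a ≠ 0) (hs : s ^ 2 = b ^ 2 - 4 * a * c) :
    a * ((b + s) / (2 * a)) ^ 2 - b * ((b + s) / (2 * a)) + c = 0 := by
  field_simp
  linear_combination hs

theorem quadratic_eval_root_sub (ha : a ≠ 0) (hs : s ^ 2 = b ^ 2 - 4 * a * c) :
    a * ((b - s) / (2 * a)) ^ 2 - b * ((b - s) / (2 * a)) + c = 0 := by
  field_simp
  linear_combination hs

theorem le_quadratic_root_sub (ha : 0 < a) (hs0 : 0 ≤ s) (hs : s ^ 2 = b ^ 2 - 4 * a * c)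
    (hx : 2 * a * x ≤ b) (hQ : 0 ≤ a * x ^ 2 - b * x + c) : x ≤ (b - s) / (2 * a) := by
  have hsq : s ^ 2 ≤ (b - 2 * a * x) ^ 2 := by nlinarith
  have hs_le : s ≤ b - 2 * a * x :=
    (pow_le_pow_iff_left₀ hs0 (by linarith) two_ne_zero).mp hsq
  rw [le_div_iff₀ (by positivity)]
  linarith

theorem quadratic_root_sub_le_add (ha : 0 < a) (hs0 : 0 ≤ s) :
    (b - s) / (2 * a) ≤ (b + s) / (2 * a) :=
  div_le_div_of_nonneg_right (by linarith) (by positivity)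

end QuadraticRoots

theorem hasDerivAt_quadratic (p q r x : ℝ) :
    HasDerivAt (fun X => p * X ^ 2 + q * X + r) (2 * p * x + q) x := by
  have h := (((hasDerivAt_pow 2 x).const_mul p).add ((hasDerivAt_id x).const_mul q)).add_const r
  exact h.congr_deriv (by ring)

section KineticWave

variable {ε σ : ℝ}

theorem kinetic_product_eq (hε : ε ≠ 0) (m : ℝ) :
    (m * (ε⁻¹ + σ) - 1) * (m * (ε⁻¹ - σ) + 1) =
      (ε⁻¹ ^ 2 + 1) * (σ * m - 1) + ε⁻¹ ^ 2 * ((1 - ε ^ 2 * σ ^ 2) * m ^ 2 - σ * (1 - ε ^ 2) * m + 1) := by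
  field_simp
  ring

theorem kinetic_product_nonneg_of_root (hε : ε ≠ 0) (hσ : 0 < σ) {m : ℝ}
    (hroot : (1 - ε ^ 2 * σ ^ 2) * m ^ 2 - σ * (1 - ε ^ 2) * m + 1 = 0) (hm : 1 / σ ≤ m) :
    0 ≤ (m * (ε⁻¹ + σ) - 1) * (m * (ε⁻¹ - σ) + 1) := by
  have hσm : 1 ≤ σ * m := by rwa [div_le_iff₀' hσ] at hm
  rw [kinetic_product_eq hε, hroot, mul_zero, add_zero]
  exact mul_nonneg (by positivity) (by linarith)

theorem kinetic_quadratic_eval_inv (hσ : σ ≠ 0) :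
    (1 - ε ^ 2 * σ ^ 2) * (1 / σ) ^ 2 - σ * (1 - ε ^ 2) * (1 / σ) + 1 = 1 / σ ^ 2 := by
  field_simp
  ring

theorem kinetic_vertex_ge_inv (hσ : 0 < σ) (hσε : 2 ≤ σ ^ 2 * (1 + ε ^ 2)) :
    2 * (1 - ε ^ 2 * σ ^ 2) * (1 / σ) ≤ σ * (1 - ε ^ 2) := by
  rw [mul_one_div, div_le_iff₀ hσ]
  linarith

theorem one_sub_sq_mul_sq_pos (hε : 0 < ε) (hσ : 0 < σ) (hεσ : ε * σ < 1) :
    0 < 1 - ε ^ 2 * σ ^ 2 := by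
  nlinarith [mul_pos hε hσ]

/-- `σ > 2 - σε² > 2 - ε > 1`. -/
theorem two_le_sq_mul_one_add_sq (hε : 0 < ε) (hε1 : ε < 1) (hεσ : ε * σ < 1)
    (hσl : 2 ≤ σ * (1 + ε ^ 2)) : 2 ≤ σ ^ 2 * (1 + ε ^ 2) := by
  have hσ1 : 1 < σ := by nlinarith
  nlinarith

theorem kinetic_deriv_eq (hε : ε ≠ 0) (hσ : σ ≠ 0) :
    2 * (ε⁻¹ ^ 2 - σ ^ 2) * (-1 / σ) + σ * (ε⁻¹ ^ 2 - 1) = ε⁻¹ ^ 2 * (σ ^ 2 * (1 + ε ^ 2) - 2) / σ := by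
  field_simp
  ring

end KineticWave

/-- Positivity-of-components lemma for the kinetic wave: for each root
μ ∈ {μ₋, μ₊}, (μ(ε⁻¹+σ)−1)(μ(ε⁻¹−σ)+1) ≥ 0; equivalently −1/σ dominates
both roots −μ± of P, since P(−1/σ) = 1/(ε²σ²) > 0 and P'(−1/σ) ≥ 0. -/
theorem stmt18 (ε σ : ℝ) (hε : 0 < ε) (hε1 : ε < 1)
    (hσl : 2/(1+ε^2) ≤ σ) (hσu : σ < ε⁻¹) :
    let d : ℝ := Real.sqrt (σ^2*(1+ε^2)^2 - 4)
    let μp : ℝ := (σ*(1-ε^2) + d) / (2*(1-ε^2*σ^2))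
    let μm : ℝ := (σ*(1-ε^2) - d) / (2*(1-ε^2*σ^2))
    let P : ℝ → ℝ := fun X => (ε⁻¹^2 - σ^2)*X^2 + σ*(ε⁻¹^2 - 1)*X + ε⁻¹^2
    (0 ≤ (μm*(ε⁻¹+σ) - 1)*(μm*(ε⁻¹-σ) + 1)) ∧
    (0 ≤ (μp*(ε⁻¹+σ) - 1)*(μp*(ε⁻¹-σ) + 1)) ∧
    (-μp ≤ -1/σ ∧ -μm ≤ -1/σ) ∧
    P (-1/σ) = 1/(ε^2*σ^2) ∧
    0 ≤ deriv P (-1/σ) := by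
  intro d μp μm P
  have hσl' : 2 ≤ σ * (1 + ε ^ 2) := by rwa [div_le_iff₀ (by positivity)] at hσl
  have hσ : 0 < σ := lt_of_lt_of_le (by positivity) hσl
  have hεσ : ε * σ < 1 := by rwa [← one_div, lt_div_iff₀' hε] at hσu
  have ha := one_sub_sq_mul_sq_pos hε hσ hεσ
  have hvertex := two_le_sq_mul_one_add_sq hε hε1 hεσ hσl'
  have hd : d ^ 2 = (σ * (1 - ε ^ 2)) ^ 2 - 4 * (1 - ε ^ 2 * σ ^ 2) * 1 := by
    rw [Real.sq_sqrt (by nlinarith)]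
    ring
  have hμm : 1 / σ ≤ μm := le_quadratic_root_sub ha (Real.sqrt_nonneg _) hd
    (kinetic_vertex_ge_inv hσ hvertex) (by rw [kinetic_quadratic_eval_inv hσ.ne']; positivity)
  have hμp : 1 / σ ≤ μp := hμm.trans (quadratic_root_sub_le_add ha (Real.sqrt_nonneg _))
  refine ⟨kinetic_product_nonneg_of_root hε.ne' hσ (quadratic_eval_root_sub ha.ne' hd) hμm,
    kinetic_product_nonneg_of_root hε.ne' hσ (quadratic_eval_root_add ha.ne' hd) hμp,
    ⟨by rw [neg_div]; exact neg_le_neg hμp, by rw [neg_div]; exact neg_le_neg hμm⟩, ?_, ?_⟩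
  · change (ε⁻¹^2 - σ^2)*(-1/σ)^2 + σ*(ε⁻¹^2 - 1)*(-1/σ) + ε⁻¹^2 = 1/(ε^2*σ^2)
    field_simp
    ring
  · rw [(hasDerivAt_quadratic _ _ _ _).deriv, kinetic_deriv_eq hε.ne' hσ.ne']
    have : 0 ≤ σ ^ 2 * (1 + ε ^ 2) - 2 := by linarith
    positivity
end
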